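/- The number of inversions of the bit-reversal permutation π_n on [k] with k=2^n equals k²/4 − (n+1)k/4. -/

import Mathlib

/-- The bit-reversal permutation on `n` bits: reverses the binary digits of `j`. -/
def bitrev (n j : ℕ) : ℕ := ∑ i ∈ Finset.range n, (j / 2 ^ i % 2) * 2 ^ (n - 1 - i)

/-!
Write `R n` for `bitrev n`. Since `R (n + 1) (2a) = R n a` and `R (n + 1) (2a + 1) = R n a + 2ⁿ`,
the permutation `R (n + 1)` interleaves `R n` with its shift by `2ⁿ`. Pairs of equal parity
inherit exactly the inversions of `R n` (twice), an even entry before an odd one is never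
inverted, and an odd entry `2a + 1` before an even entry `2c` always is. So the inversion
counts satisfy `I (n + 1) = 2 I n + C(2ⁿ, 2)`, which solves to `4 I n = 4ⁿ - (n + 1) 2ⁿ`.
-/

open Finset

def inversionCount (f : ℕ → ℕ) (N : ℕ) : ℕ :=
  #{p ∈ range N ×ˢ range N | p.1 < p.2 ∧ f p.2 < f p.1}

lemma inversionCount_eq_sum (f : ℕ → ℕ) (N : ℕ) :
    inversionCount f N = ∑ i ∈ range N, ∑ j ∈ range N, if i < j ∧ f j < f i then 1 else 0 := by
  rw [inversionCount, card_filter, sum_product]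

lemma sum_range_two_mul {M : Type*} [AddCommMonoid M] (g : ℕ → M) (m : ℕ) :
    ∑ i ∈ range (2 * m), g i = ∑ a ∈ range m, (g (2 * a) + g (2 * a + 1)) := by
  induction m with
  | zero => simp
  | succ m ih => rw [mul_add_one, sum_range_succ, sum_range_succ, sum_range_succ, ih, add_assoc]

lemma sum_range_sum_range_boole_lt (m : ℕ) :
    ∑ a ∈ range m, ∑ c ∈ range m, (if a < c then 1 else 0) = m.choose 2 := by
  rw [sum_comm, Nat.choose_two_right, ← sum_range_id]
  refine sum_congr rfl fun c hc => ?_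
  rw [sum_boole, Nat.cast_id, show {a ∈ range m | a < c} = range c by ext; simp at hc ⊢; omega, card_range]

lemma inversionCount_interleave {f g : ℕ → ℕ} {m : ℕ} (hg : ∀ a < m, g a < m)
    (h_even : ∀ a, f (2 * a) = g a) (h_odd : ∀ a, f (2 * a + 1) = g a + m) :
    inversionCount f (2 * m) = 2 * inversionCount g m + m.choose 2 := by
  have hterm : ∀ a ∈ range m, ∀ c ∈ range m,
      ((if 2 * a < 2 * c ∧ f (2 * c) < f (2 * a) then 1 else 0) +
        (if 2 * a < 2 * c + 1 ∧ f (2 * c + 1) < f (2 * a) then 1 else 0)) +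
      ((if 2 * a + 1 < 2 * c ∧ f (2 * c) < f (2 * a + 1) then 1 else 0) +
        (if 2 * a + 1 < 2 * c + 1 ∧ f (2 * c + 1) < f (2 * a + 1) then 1 else 0)) =
      2 * (if a < c ∧ g c < g a then 1 else 0) + (if a < c then 1 else 0) := by
    intro a ha c hc
    have := hg a (mem_range.1 ha)
    have := hg c (mem_range.1 hc)
    simp only [h_even, h_odd]
    split_ifs <;> omega
  simp only [inversionCount_eq_sum, sum_range_two_mul, ← sum_add_distrib]
  rw [← sum_range_sum_range_boole_lt, mul_sum, ← sum_add_distrib]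
  refine sum_congr rfl fun a ha => ?_
  rw [mul_sum, ← sum_add_distrib]
  exact sum_congr rfl (hterm a ha)

lemma bitrev_succ (n j : ℕ) : bitrev (n + 1) j = bitrev n (j / 2) + j % 2 * 2 ^ n := by
  rw [bitrev, sum_range_succ']
  congr 1
  · refine sum_congr rfl fun i _ => ?_
    rw [pow_succ', ← Nat.div_div_eq_div_mul]
    congr 2
    omega
  · simp

lemma bitrev_lt (n j : ℕ) : bitrev n j < 2 ^ n := by
  induction n generalizing j with
  | zero => simp [bitrev]
  | succ n ih =>
    rw [bitrev_succ, pow_succ]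
    have := ih (j / 2)
    have : j % 2 ≤ 1 := Nat.le_of_lt_succ (Nat.mod_lt j two_pos)
    nlinarith

lemma bitrev_succ_two_mul (n a : ℕ) : bitrev (n + 1) (2 * a) = bitrev n a := by
  simp [bitrev_succ]

lemma bitrev_succ_two_mul_add_one (n a : ℕ) :
    bitrev (n + 1) (2 * a + 1) = bitrev n a + 2 ^ n := by
  simp [bitrev_succ, Nat.mul_add_div]

lemma inversionCount_bitrev_succ (n : ℕ) :
    inversionCount (bitrev (n + 1)) (2 ^ (n + 1)) =
      2 * inversionCount (bitrev n) (2 ^ n) + (2 ^ n).choose 2 := by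
  rw [pow_succ', inversionCount_interleave (fun a _ => bitrev_lt n a)
    (bitrev_succ_two_mul n) (bitrev_succ_two_mul_add_one n)]

lemma four_mul_inversionCount_bitrev_add (n : ℕ) :
    4 * inversionCount (bitrev n) (2 ^ n) + (n + 1) * 2 ^ n = (2 ^ n) ^ 2 := by
  induction n with
  | zero => rfl
  | succ n ih =>
    have hchoose : (2 ^ n).choose 2 * 2 = 2 ^ n * (2 ^ n - 1) := by
      rw [← sum_range_id_mul_two, sum_range_id, Nat.choose_two_right]
    have hpos : 1 ≤ 2 ^ n := Nat.one_le_two_pow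
    rw [inversionCount_bitrev_succ, pow_succ 2]
    zify [hpos] at ih hchoose ⊢
    linear_combination 2 * ih + 2 * hchoose

theorem bitrev_inversions_general (n k : ℕ) (hk : k = 2 ^ n) :
    ((Finset.filter
        (fun p : ℕ × ℕ => p.1 < p.2 ∧ bitrev n p.2 < bitrev n p.1)
        (Finset.range k ×ˢ Finset.range k)).card : ℝ)
      = (k : ℝ) ^ 2 / 4 - ((n : ℝ) + 1) * (k : ℝ) / 4 := by
  subst hk
  have h : (4 * inversionCount (bitrev n) (2 ^ n) + (n + 1) * 2 ^ n : ℝ) = (2 ^ n) ^ 2 := by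
    exact_mod_cast four_mul_inversionCount_bitrev_add n
  change (inversionCount (bitrev n) (2 ^ n) : ℝ) = _
  push_cast
  linarith

theorem bitrev_inversions (n k : ℕ) (hn : 1 ≤ n) (hk : k = 2 ^ n) :
    ((Finset.filter
        (fun p : ℕ × ℕ => p.1 < p.2 ∧ bitrev n p.2 < bitrev n p.1)
        (Finset.range k ×ˢ Finset.range k)).card : ℝ)
      = (k : ℝ) ^ 2 / 4 - ((n : ℝ) + 1) * (k : ℝ) / 4 :=
  bitrev_inversions_general n k hk
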